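/- (Gain estimate, first inequality) Let J ∈ ℝ^{m×n}, L ∈ ℝ^{p×n}, x, x* ∈ ℝⁿ, F, y^δ ∈ ℝ^m, λ > 0, θ > 1, q ∈ (0,1). Suppose d ∈ ℝⁿ satisfies (JᵀJ + λ LᵀL) d = −Jᵀ(F − y^δ), that ‖F − y^δ + J d‖ = q‖F − y^δ‖, and that ‖F − y^δ + J(x* − x)‖ ≤ (q/θ)‖F − y^δ‖. Set x⁺ := x + d. Then ‖x − x*‖_L² − ‖x⁺ − x*‖_L² ≥ ‖x⁺ − x‖_L². -/

import Mathlib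

/-!
Write `r = F - yδ`, `r⁺ = r + J d` and `r* = r + J (x* - x)`. The regularized normal equation
says `λ LᵀL d = -Jᵀ r⁺`, so `λ ⟪L d, L (x⁺ - x*)⟫ = -⟪r⁺, J (x⁺ - x*)⟫ = -⟪r⁺, r⁺ - r*⟫`.
By hypothesis `‖r*‖ ≤ (q/θ)‖r‖ ≤ q‖r‖ = ‖r⁺‖`, so Cauchy–Schwarz makes `⟪r⁺, r⁺ - r*⟫ ≥ 0`;
hence `L d` makes an obtuse angle with `L (x⁺ - x*)`, and the polarization identity
`‖u‖² - ‖u + v‖² - ‖v‖² = -2 ⟪v, u + v⟫` with `u = L (x - x*)`, `v = L d` gives the claim.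
-/

open Matrix

/-- Euclidean norm of a vector in `ℝ^k`. -/
noncomputable def euclNorm {k : ℕ} (v : Fin k → ℝ) : ℝ :=
  ‖(EuclideanSpace.equiv (Fin k) ℝ).symm v‖

section DotProduct

variable {R m n p : Type*} [CommRing R] [Fintype m] [Fintype n] [Fintype p]

theorem dotProduct_self_sub_dotProduct_self_add (a b : n → R) :
    a ⬝ᵥ a - (a + b) ⬝ᵥ (a + b) - b ⬝ᵥ b = -2 * (b ⬝ᵥ (a + b)) := by
  simp only [dotProduct_add, add_dotProduct, dotProduct_comm a b]
  ring

theorem mul_mulVec_dotProduct_mulVec_of_normal_eq {J : Matrix m n R} {L : Matrix p n R}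
    {lam : R} {r : m → R} {d : n → R}
    (hd : (Jᵀ * J + lam • (Lᵀ * L)) *ᵥ d = -(Jᵀ *ᵥ r)) (w : n → R) :
    lam * (L *ᵥ d ⬝ᵥ L *ᵥ w) = -((r + J *ᵥ d) ⬝ᵥ J *ᵥ w) := by
  have hw := congrArg (w ⬝ᵥ ·) hd
  simp only [add_mulVec, smul_mulVec, ← mulVec_mulVec, dotProduct_add, dotProduct_smul,
    dotProduct_neg, dotProduct_transpose_mulVec, smul_eq_mul] at hw
  rw [add_dotProduct]
  linear_combination hw

end DotProduct

section EuclNorm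

variable {k : ℕ}

theorem euclNorm_sq (v : Fin k → ℝ) : euclNorm v ^ 2 = v ⬝ᵥ v := by
  rw [euclNorm, EuclideanSpace.norm_sq_eq]
  simp [dotProduct, sq]

theorem dotProduct_le_euclNorm_mul_euclNorm (a b : Fin k → ℝ) :
    a ⬝ᵥ b ≤ euclNorm a * euclNorm b := by
  simpa [euclNorm, PiLp.inner_apply, dotProduct, mul_comm] using
    real_inner_le_norm ((EuclideanSpace.equiv (Fin k) ℝ).symm a)
      ((EuclideanSpace.equiv (Fin k) ℝ).symm b)

theorem dotProduct_sub_nonneg_of_euclNorm_le {a b : Fin k → ℝ}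
    (h : euclNorm b ≤ euclNorm a) : 0 ≤ a ⬝ᵥ (a - b) := by
  have hcs := dotProduct_le_euclNorm_mul_euclNorm a b
  have ha : 0 ≤ euclNorm a := norm_nonneg _
  rw [dotProduct_sub, ← euclNorm_sq]
  nlinarith [mul_le_mul_of_nonneg_left h ha]

end EuclNorm

theorem gain_estimate_first_general (m n p : ℕ)
    (J : Matrix (Fin m) (Fin n) ℝ) (L : Matrix (Fin p) (Fin n) ℝ)
    (x xstar : Fin n → ℝ) (F yδ : Fin m → ℝ)
    (lam θ q : ℝ) (hlam : 0 < lam) (hθ : 1 < θ) (hq0 : 0 < q)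
    (d : Fin n → ℝ)
    (hd : (Jᵀ * J + lam • (Lᵀ * L)).mulVec d = -(Jᵀ.mulVec (F - yδ)))
    (hqc : euclNorm (F - yδ + J.mulVec d) = q * euclNorm (F - yδ))
    (hnear : euclNorm (F - yδ + J.mulVec (xstar - x)) ≤ (q / θ) * euclNorm (F - yδ)) :
    euclNorm (L.mulVec (x - xstar)) ^ 2 - euclNorm (L.mulVec (x + d - xstar)) ^ 2 ≥
      euclNorm (L.mulVec (x + d - x)) ^ 2 := by
  have hres_le : euclNorm (F - yδ + J *ᵥ (xstar - x)) ≤ euclNorm (F - yδ + J *ᵥ d) := by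
    refine hnear.trans ?_
    rw [hqc]
    gcongr
    · exact norm_nonneg _
    · exact div_le_self hq0.le hθ.le
  have hres_sub : F - yδ + J *ᵥ d - (F - yδ + J *ᵥ (xstar - x)) = J *ᵥ (x + d - xstar) := by
    simp only [mulVec_sub, mulVec_add]
    abel
  have hobtuse : L *ᵥ d ⬝ᵥ L *ᵥ (x + d - xstar) ≤ 0 := by
    have hkey := mul_mulVec_dotProduct_mulVec_of_normal_eq hd (x + d - xstar)
    rw [← hres_sub] at hkey
    have := dotProduct_sub_nonneg_of_euclNorm_le hres_le
    nlinarith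
  have hsplit : L *ᵥ (x + d - xstar) = L *ᵥ (x - xstar) + L *ᵥ d := by
    rw [← mulVec_add]
    abel_nf
  rw [add_sub_cancel_left, hsplit, euclNorm_sq, euclNorm_sq, euclNorm_sq, ge_iff_le, ← sub_nonneg,
    dotProduct_self_sub_dotProduct_self_add, ← hsplit]
  linarith

/-- Gain estimate, first inequality: if `(JᵀJ + λLᵀL)d = −Jᵀ(F − yδ)`,
`‖F − yδ + Jd‖ = q‖F − yδ‖` and `‖F − yδ + J(x* − x)‖ ≤ (q/θ)‖F − yδ‖`, then with
`x⁺ = x + d` one has `‖x − x*‖_L² − ‖x⁺ − x*‖_L² ≥ ‖x⁺ − x‖_L²`. -/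
theorem gain_estimate_first (m n p : ℕ)
    (J : Matrix (Fin m) (Fin n) ℝ) (L : Matrix (Fin p) (Fin n) ℝ)
    (x xstar : Fin n → ℝ) (F yδ : Fin m → ℝ)
    (lam θ q : ℝ) (hlam : 0 < lam) (hθ : 1 < θ) (hq0 : 0 < q) (hq1 : q < 1)
    (d : Fin n → ℝ)
    (hd : (Jᵀ * J + lam • (Lᵀ * L)).mulVec d = -(Jᵀ.mulVec (F - yδ)))
    (hqc : euclNorm (F - yδ + J.mulVec d) = q * euclNorm (F - yδ))
    (hnear : euclNorm (F - yδ + J.mulVec (xstar - x)) ≤ (q / θ) * euclNorm (F - yδ)) :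
    euclNorm (L.mulVec (x - xstar)) ^ 2 - euclNorm (L.mulVec (x + d - xstar)) ^ 2 ≥
      euclNorm (L.mulVec (x + d - x)) ^ 2 :=
  gain_estimate_first_general m n p J L x xstar F yδ lam θ q hlam hθ hq0 d hd hqc hnear
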